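/- arXiv:0710.5404 — 2 statements merged into one kernel-verified Lean document; each statement's English description precedes it below -/
import Mathlib

section
/- Let c > 0 and d ≥ 1 be given. Let (u,v) be a bounded classical solution of the system ∂u/∂t = Δu + (2c(1−u)+1)v − u, ∂v/∂t = Δv + (c(u−v)−2)v on [0,∞)×ℝ^d such that (u(0,x), v(0,x)) ∈ ℛ = {(u,v) ∈ ℝ² : 0 ≤ v ≤ u ≤ 1} for all x ∈ ℝ^d. Then (u(t,x), v(t,x)) ∈ ℛ for all t ≥ 0 and all x ∈ ℝ^d. -/
/-
Perturb the three quantities `v`, `u - v`, `1 - u`, whose nonnegativity defines `ℛ`, by the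
barrier `φ = ε e^{a t} (1 + |x|²)`. Since the solution is bounded, the barrier wins for large `|x|`,
so if a perturbed quantity ever reached `0` there would be a first time `t₀ > 0` and a point `x₀`
where one of them vanishes. There the time derivative of the unperturbed quantity is `≤ -a φ`,
its Laplacian is `≥ -2d φ`, and, because the other two perturbed quantities are still
nonnegative, its reaction term is `≥ -(4c(M+1) + 2) φ`, where `M` bounds `|u|` and `|v|`.
This is impossible once `a > 2d + 4c(M+1) + 2`. Letting `ε → 0` proves the invariance of `ℛ`.
-/

open Set

/-- Pointwise time derivative of `u : ℝ → (Fin d → ℝ) → ℝ`. -/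
noncomputable def timeDeriv {d : ℕ} (u : ℝ → (Fin d → ℝ) → ℝ) (t : ℝ) (x : Fin d → ℝ) : ℝ :=
  deriv (fun τ => u τ x) t

/-- Pointwise spatial Laplacian `Δu = ∑ i ∂²u/∂xᵢ²`. -/
noncomputable def lapl {d : ℕ} (u : ℝ → (Fin d → ℝ) → ℝ) (t : ℝ) (x : Fin d → ℝ) : ℝ :=
  ∑ i : Fin d, iteratedDeriv 2 (fun s => u t (Function.update x i s)) (x i)

/-- A bounded classical solution on `[0,∞) × ℝ^d` of the system
`∂u/∂t = Δu + (2c(1−u)+1)v − u`, `∂v/∂t = Δv + (c(u−v)−2)v`: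
both functions are bounded, continuous on `[0,∞) × ℝ^d`, C¹ in `t` and C² in `x`
for `t > 0`, and satisfy the system pointwise for `t > 0`. -/
structure IsBddClassicalSol (d : ℕ) (c : ℝ) (u v : ℝ → (Fin d → ℝ) → ℝ) : Prop where
  bdd_u : ∃ C, ∀ t x, |u t x| ≤ C
  bdd_v : ∃ C, ∀ t x, |v t x| ≤ C
  cont_u : ContinuousOn (fun p : ℝ × (Fin d → ℝ) => u p.1 p.2) (Ici 0 ×ˢ univ)
  cont_v : ContinuousOn (fun p : ℝ × (Fin d → ℝ) => v p.1 p.2) (Ici 0 ×ˢ univ)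
  t_reg_u : ∀ x, ContDiffOn ℝ 1 (fun τ => u τ x) (Ioi 0)
  t_reg_v : ∀ x, ContDiffOn ℝ 1 (fun τ => v τ x) (Ioi 0)
  x_reg_u : ∀ t, 0 < t → ContDiff ℝ 2 (fun x => u t x)
  x_reg_v : ∀ t, 0 < t → ContDiff ℝ 2 (fun x => v t x)
  eq_u : ∀ t, 0 < t → ∀ x,
    timeDeriv u t x = lapl u t x + (2 * c * (1 - u t x) + 1) * v t x - u t x
  eq_v : ∀ t, 0 < t → ∀ x,
    timeDeriv v t x = lapl v t x + (c * (u t x - v t x) - 2) * v t x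

open Filter Topology Function

theorem deriv_nonpos_of_isMinOn_Ico {g : ℝ → ℝ} {a b : ℝ} (hab : a < b)
    (hmin : IsMinOn g (Ico a b) b) : deriv g b ≤ 0 := by
  by_cases hg : DifferentiableAt ℝ g b
  swap
  · exact (deriv_zero_of_not_differentiableAt hg).le
  have hslope := (hasDerivAt_iff_tendsto_slope.mp hg.hasDerivAt).mono_left
    (nhdsWithin_mono _ fun _ ht => ne_of_lt ht : 𝓝[<] b ≤ 𝓝[≠] b)
  refine le_of_tendsto hslope ?_
  filter_upwards [Ioo_mem_nhdsLT hab] with t ht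
  rw [slope_def_field]
  exact div_nonpos_of_nonneg_of_nonpos (sub_nonneg.mpr (hmin ⟨ht.1.le, ht.2⟩))
    (sub_nonpos.mpr ht.2.le)

theorem IsLocalMin.deriv_deriv_nonneg {f : ℝ → ℝ} {a : ℝ} (hmin : IsLocalMin f a)
    (hf : ContinuousAt f a) : 0 ≤ deriv (deriv f) a := by
  by_contra! hneg
  have hmax := isLocalMax_of_deriv_deriv_neg hneg hmin.deriv_eq_zero hf
  have hconst : f =ᶠ[𝓝 a] fun _ => f a := by
    filter_upwards [hmin, hmax] with s hs₁ hs₂ using le_antisymm hs₂ hs₁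
  have : deriv (deriv f) a = 0 := by
    rw [hconst.deriv.deriv_eq, deriv_const', deriv_const]
  exact hneg.ne this

theorem neg_two_mul_le_iteratedDeriv_two {f : ℝ → ℝ} {e a : ℝ} (hf : ContDiff ℝ 2 f)
    (hmin : IsLocalMin (fun s => f s + e * s ^ 2) a) : -(2 * e) ≤ iteratedDeriv 2 f a := by
  have hquad : ContDiff ℝ 2 fun s : ℝ => e * s ^ 2 := by fun_prop
  have h : 0 ≤ iteratedDeriv 2 (fun s => f s + e * s ^ 2) a := by
    simpa [iteratedDeriv_eq_iterate] using
      hmin.deriv_deriv_nonneg (hf.continuous.add hquad.continuous).continuousAt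
  have hquad₂ : iteratedDeriv 2 (fun s : ℝ => e * s ^ 2) a = 2 * e := by
    simp [iteratedDeriv_const_mul_field, iteratedDeriv_pow, mul_comm]
  rw [iteratedDeriv_fun_add hf.contDiffAt hquad.contDiffAt, hquad₂] at h
  linarith

theorem sum_sq_update {ι : Type*} [Fintype ι] [DecidableEq ι] (x : ι → ℝ) (i : ι) (s : ℝ) :
    ∑ j, update x i s j ^ 2 = ∑ j, x j ^ 2 + (s ^ 2 - x i ^ 2) := by
  simp only [update_apply, apply_ite (· ^ 2), Finset.sum_ite, Finset.filter_eq', Finset.mem_univ,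
    ↓reduceIte, Finset.sum_const, Finset.card_singleton, one_smul, Finset.filter_ne',
    Finset.sum_erase_eq_sub]
  ring

theorem isBounded_setOf_sum_sq_le {ι : Type*} [Fintype ι] (r : ℝ) :
    Bornology.IsBounded {x : ι → ℝ | ∑ i, x i ^ 2 ≤ r} := by
  refine (Metric.isBounded_iff_subset_closedBall 0).mpr ⟨√r, fun x hx => ?_⟩
  rw [mem_closedBall_zero_iff]
  refine (pi_norm_le_iff_of_nonneg (Real.sqrt_nonneg r)).mpr fun i => ?_
  exact Real.abs_le_sqrt
    ((Finset.single_le_sum (fun j _ => sq_nonneg (x j)) (Finset.mem_univ i)).trans hx)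

theorem exists_first_time_nonpos {E : Type*} [MetricSpace E] [ProperSpace E]
    {F : ℝ × E → ℝ} (hF : ContinuousOn F (Ici 0 ×ˢ univ))
    (hbdd : Bornology.IsBounded {x | ∃ t, 0 ≤ t ∧ F (t, x) ≤ 0})
    (hinit : ∀ x, 0 < F (0, x)) {t₁ : ℝ} {x₁ : E} (ht₁ : 0 ≤ t₁) (hF₁ : F (t₁, x₁) ≤ 0) :
    ∃ t₀ x₀, 0 < t₀ ∧ F (t₀, x₀) ≤ 0 ∧ (∀ x, 0 ≤ F (t₀, x)) ∧
      ∀ t ∈ Ico 0 t₀, ∀ x, 0 < F (t, x) := by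
  set K := Icc 0 t₁ ×ˢ closure {x | ∃ t, 0 ≤ t ∧ F (t, x) ≤ 0}
  have hK : IsCompact K := isCompact_Icc.prod hbdd.isCompact_closure
  have hKF : ContinuousOn F K := hF.mono (prod_mono Icc_subset_Ici_self (subset_univ _))
  have hZ : IsCompact (K ∩ F ⁻¹' Iic 0) := hK.of_isClosed_subset
    (hKF.preimage_isClosed_of_isClosed hK.isClosed isClosed_Iic) inter_subset_left
  have hmemZ {t x} (ht : t ∈ Icc 0 t₁) (hFt : F (t, x) ≤ 0) : (t, x) ∈ K ∩ F ⁻¹' Iic 0 :=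
    ⟨⟨ht, subset_closure ⟨t, ht.1, hFt⟩⟩, hFt⟩
  obtain ⟨⟨t₀, x₀⟩, ⟨⟨ht₀, -⟩, hF₀⟩, hfirst⟩ :=
    hZ.exists_isMinOn ⟨_, hmemZ ⟨ht₁, le_rfl⟩ hF₁⟩ continuous_fst.continuousOn
  have hbefore : ∀ t ∈ Ico 0 t₀, ∀ x, 0 < F (t, x) := fun t ht x => by
    by_contra! hFt
    exact (hfirst (hmemZ ⟨ht.1, ht.2.le.trans ht₀.2⟩ hFt)).not_gt ht.2
  have ht₀pos : 0 < t₀ := ht₀.1.lt_of_ne fun h => (hinit x₀).not_ge (h ▸ hF₀)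
  refine ⟨t₀, x₀, ht₀pos, hF₀, fun x => ?_, hbefore⟩
  have hcont : ContinuousAt (fun t => F (t, x)) t₀ :=
    ContinuousAt.comp (f := fun t => (t, x))
      (hF.continuousAt (prod_mem_nhds (Ici_mem_nhds ht₀pos) univ_mem)) (by fun_prop)
  refine ge_of_tendsto (hcont.tendsto.mono_left (nhdsWithin_le_nhds (s := Iio t₀))) ?_
  filter_upwards [Ioo_mem_nhdsLT ht₀pos] with t ht using (hbefore t ⟨ht.1.le, ht.2⟩ x).le

section Operators

variable {d : ℕ} {u v : ℝ → (Fin d → ℝ) → ℝ} {t : ℝ} {x : Fin d → ℝ}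

theorem timeDeriv_sub (hu : DifferentiableAt ℝ (fun τ => u τ x) t)
    (hv : DifferentiableAt ℝ (fun τ => v τ x) t) :
    timeDeriv (u - v) t x = timeDeriv u t x - timeDeriv v t x :=
  deriv_sub hu hv

theorem lapl_sub (hu : ContDiff ℝ 2 (u t)) (hv : ContDiff ℝ 2 (v t)) :
    lapl (u - v) t x = lapl u t x - lapl v t x := by
  rw [lapl, lapl, lapl, ← Finset.sum_sub_distrib]
  refine Finset.sum_congr rfl fun i _ => ?_
  exact iteratedDeriv_fun_sub (hu.comp (contDiff_update 2 x i)).contDiffAt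
    (hv.comp (contDiff_update 2 x i)).contDiffAt

@[simp] theorem timeDeriv_one : timeDeriv (1 : ℝ → (Fin d → ℝ) → ℝ) t x = 0 :=
  deriv_const t 1

@[simp] theorem lapl_one : lapl (1 : ℝ → (Fin d → ℝ) → ℝ) t x = 0 := by
  simp [lapl, iteratedDeriv_const]

theorem neg_two_mul_le_lapl {e : ℝ} (hu : ContDiff ℝ 2 (u t))
    (hmin : IsMinOn (fun y => u t y + e * ∑ i, y i ^ 2) univ x) :
    -(2 * d * e) ≤ lapl u t x := by
  have hcoord (i : Fin d) :
      -(2 * e) ≤ iteratedDeriv 2 (fun s => u t (update x i s)) (x i) := by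
    refine neg_two_mul_le_iteratedDeriv_two (hu.comp (contDiff_update 2 x i))
      (Eventually.of_forall fun s => ?_)
    have h : u t x + e * ∑ j, x j ^ 2 ≤ u t (update x i s) + e * ∑ j, update x i s j ^ 2 :=
      hmin (mem_univ _)
    rw [sum_sq_update] at h
    simp only [update_eq_self]
    linarith
  calc -(2 * d * e) = ∑ _i : Fin d, -(2 * e) := by
        simp only [Finset.sum_const, Finset.card_univ, Fintype.card_fin, nsmul_eq_mul]
        ring
    _ ≤ lapl u t x := Finset.sum_le_sum fun i _ => hcoord i

end Operators

noncomputable def barrier {d : ℕ} (a t : ℝ) (x : Fin d → ℝ) : ℝ :=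
  Real.exp (a * t) * (1 + ∑ i, x i ^ 2)

section Barrier

variable {d : ℕ} {a t : ℝ} {x : Fin d → ℝ}

theorem barrier_pos : 0 < barrier a t x := by
  unfold barrier
  positivity

theorem continuous_barrier : Continuous fun p : ℝ × (Fin d → ℝ) => barrier a p.1 p.2 := by
  unfold barrier
  fun_prop

theorem hasDerivAt_barrier : HasDerivAt (fun τ => barrier a τ x) (a * barrier a t x) t := by
  refine (((hasDerivAt_id t).const_mul a).exp.mul_const (1 + ∑ i, x i ^ 2)).congr_deriv ?_
  simp only [barrier, id]
  ring

theorem sum_sq_le_barrier (ha : 0 ≤ a) (ht : 0 ≤ t) : ∑ i, x i ^ 2 ≤ barrier a t x := by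
  have hexp : 1 ≤ Real.exp (a * t) := Real.one_le_exp (mul_nonneg ha ht)
  have hsum : 0 ≤ ∑ i, x i ^ 2 := by positivity
  unfold barrier
  nlinarith

end Barrier

theorem timeDeriv_sub_lapl_le_of_touch {d : ℕ} {w : ℝ → (Fin d → ℝ) → ℝ} {ε a t₀ : ℝ}
    {x₀ : Fin d → ℝ} (hε : 0 ≤ ε) (ht₀ : 0 < t₀)
    (hwt : DifferentiableAt ℝ (fun t => w t x₀) t₀) (hwx : ContDiff ℝ 2 (w t₀))
    (hbefore : ∀ t ∈ Ico 0 t₀, -(ε * barrier a t x₀) ≤ w t x₀)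
    (hspace : ∀ x, -(ε * barrier a t₀ x) ≤ w t₀ x)
    (htouch : w t₀ x₀ ≤ -(ε * barrier a t₀ x₀)) :
    timeDeriv w t₀ x₀ - lapl w t₀ x₀ ≤ (2 * d - a) * (ε * barrier a t₀ x₀) := by
  have htime : timeDeriv w t₀ x₀ + ε * (a * barrier a t₀ x₀) ≤ 0 := by
    have hg := hwt.hasDerivAt.fun_add ((hasDerivAt_barrier (a := a) (x := x₀)).const_mul ε)
    rw [timeDeriv, ← hg.deriv]
    refine deriv_nonpos_of_isMinOn_Ico ht₀ (isMinOn_iff.mpr fun t ht => ?_)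
    linarith [hbefore t ht]
  set e := ε * Real.exp (a * t₀)
  have hspace : -(2 * d * e) ≤ lapl w t₀ x₀ := by
    refine neg_two_mul_le_lapl hwx (isMinOn_iff.mpr fun y _ => ?_)
    have hy := hspace y
    simp only [barrier] at hy htouch
    linarith
  have he : e ≤ ε * barrier a t₀ x₀ := by
    have : (1 : ℝ) ≤ 1 + ∑ i, x₀ i ^ 2 := le_add_of_nonneg_right (by positivity)
    unfold barrier
    rw [← mul_assoc]
    exact le_mul_of_one_le_right (by positivity) this
  have hd : (0 : ℝ) ≤ d := d.cast_nonneg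
  nlinarith

def regionGap (u v : ℝ) : ℝ := min v (min (u - v) (1 - u))

theorem continuous_regionGap : Continuous fun p : ℝ × ℝ => regionGap p.1 p.2 := by
  unfold regionGap
  fun_prop

section RegionGap

variable {u v b : ℝ}

theorem le_regionGap_iff : b ≤ regionGap u v ↔ b ≤ v ∧ b ≤ u - v ∧ b ≤ 1 - u := by
  simp only [regionGap, le_min_iff]

theorem regionGap_le_iff : regionGap u v ≤ b ↔ v ≤ b ∨ u - v ≤ b ∨ 1 - u ≤ b := by
  simp only [regionGap, min_le_iff]

theorem regionGap_nonneg_iff : 0 ≤ regionGap u v ↔ 0 ≤ v ∧ v ≤ u ∧ u ≤ 1 := by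
  simp only [le_regionGap_iff, sub_nonneg]

theorem neg_le_regionGap {M : ℝ} (hu : |u| ≤ M) (hv : |v| ≤ M) :
    -(2 * M + 1) ≤ regionGap u v := by
  rw [abs_le] at hu hv
  exact le_regionGap_iff.mpr ⟨by linarith, by linarith, by linarith⟩

end RegionGap

section Reaction

variable {c M u v φ : ℝ}

theorem reaction_v_ge (hc : 0 ≤ c) (hφ : 0 ≤ φ) (hu : |u| ≤ M) (hv : |v| ≤ M)
    (hvφ : v = -φ) : -(4 * c * (M + 1) + 2) * φ ≤ (c * (u - v) - 2) * v := by
  rw [abs_le] at hu hv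
  subst hvφ
  nlinarith [mul_nonneg hc hφ]

theorem reaction_u_sub_v_ge (hc : 0 ≤ c) (hφ : 0 ≤ φ) (hu : |u| ≤ M) (hv : |v| ≤ M)
    (hvφ : -φ ≤ v) (huφ : -φ ≤ 1 - u) (huv : u - v = -φ) :
    -(4 * c * (M + 1) + 2) * φ ≤ (2 * c * (1 - u) + 1) * v - u - (c * (u - v) - 2) * v := by
  have hM : 0 ≤ M := (abs_nonneg u).trans hu
  rw [abs_le] at hu hv
  obtain rfl : u = v - φ := by linarith
  rcases le_total 0 v with hv0 | hv0
  · nlinarith [mul_nonneg (mul_nonneg hc (by linarith : 0 ≤ 1 - (v - φ) + φ)) hv0,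
      mul_nonneg (mul_nonneg hc hφ) (by linarith : 0 ≤ M - v), mul_nonneg (mul_nonneg hc hφ) hM]
  · nlinarith [mul_nonneg (mul_nonneg hc (by linarith : 0 ≤ 4 * M + 2 + 2 * (v - φ) - φ))
      (by linarith : 0 ≤ -v), mul_nonneg (by positivity : 0 ≤ 4 * c * (M + 1) + 2)
      (by linarith : 0 ≤ v + φ)]

theorem reaction_one_sub_u_ge (hc : 0 ≤ c) (hφ : 0 ≤ φ) (hu : |u| ≤ M)
    (hvφ : -φ ≤ v) (huv : -φ ≤ u - v) (huφ : 1 - u = -φ) :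
    -(4 * c * (M + 1) + 2) * φ ≤ -((2 * c * (1 - u) + 1) * v - u) := by
  rw [abs_le] at hu
  obtain rfl : u = 1 + φ := by linarith
  nlinarith [mul_nonneg hc hφ, mul_nonneg (mul_nonneg hc hφ) (by linarith : 0 ≤ v + φ)]

end Reaction

namespace IsBddClassicalSol

variable {d : ℕ} {c M a ε : ℝ} {u v : ℝ → (Fin d → ℝ) → ℝ}

theorem regionGap_add_barrier_pos_of_pos_before (hsol : IsBddClassicalSol d c u v) (hc : 0 ≤ c)
    (hM : ∀ t x, |u t x| ≤ M ∧ |v t x| ≤ M) (ha : 2 * d + 4 * c * (M + 1) + 2 < a) (hε : 0 < ε)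
    {t₀ : ℝ} (ht₀ : 0 < t₀)
    (hbefore : ∀ t ∈ Ico 0 t₀, ∀ x, 0 < regionGap (u t x) (v t x) + ε * barrier a t x)
    (hspace : ∀ x, 0 ≤ regionGap (u t₀ x) (v t₀ x) + ε * barrier a t₀ x) (x₀ : Fin d → ℝ) :
    0 < regionGap (u t₀ x₀) (v t₀ x₀) + ε * barrier a t₀ x₀ := by
  set φ := ε * barrier a t₀ x₀
  have hφ : 0 < φ := mul_pos hε barrier_pos
  by_contra! htouch
  have hbefore' t ht x := le_regionGap_iff.mp (neg_le_iff_add_nonneg.mpr (hbefore t ht x).le)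
  have hspace' x := le_regionGap_iff.mp (neg_le_iff_add_nonneg.mpr (hspace x))
  obtain ⟨hv₀, huv₀, hu₀⟩ := hspace' x₀
  have hut := ((hsol.t_reg_u x₀).differentiableOn one_ne_zero).differentiableAt (Ioi_mem_nhds ht₀)
  have hvt := ((hsol.t_reg_v x₀).differentiableOn one_ne_zero).differentiableAt (Ioi_mem_nhds ht₀)
  have hux := hsol.x_reg_u t₀ ht₀
  have hvx := hsol.x_reg_v t₀ ht₀
  have hequ := hsol.eq_u t₀ ht₀ x₀
  have heqv := hsol.eq_v t₀ ht₀ x₀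
  have hclose (R : ℝ) (hR : -(4 * c * (M + 1) + 2) * φ ≤ R) (hR' : R ≤ (2 * d - a) * φ) :
      False := by
    have : (2 * d - a) * φ < -(4 * c * (M + 1) + 2) * φ := mul_lt_mul_of_pos_right (by linarith) hφ
    linarith
  rcases regionGap_le_iff.mp (le_neg_iff_add_nonpos_right.mpr htouch) with h | h | h
  · refine hclose _ (reaction_v_ge hc hφ.le (hM t₀ x₀).1 (hM t₀ x₀).2 (le_antisymm h hv₀)) ?_
    have := timeDeriv_sub_lapl_le_of_touch hε.le ht₀ hvt hvx (fun t ht => (hbefore' t ht x₀).1)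
      (fun x => (hspace' x).1) h
    linarith
  · refine hclose _ (reaction_u_sub_v_ge hc hφ.le (hM t₀ x₀).1 (hM t₀ x₀).2 hv₀ hu₀
      (le_antisymm h huv₀)) ?_
    have := timeDeriv_sub_lapl_le_of_touch (w := u - v) hε.le ht₀ (hut.sub hvt) (hux.sub hvx)
      (fun t ht => (hbefore' t ht x₀).2.1) (fun x => (hspace' x).2.1) h
    rw [timeDeriv_sub hut hvt, lapl_sub hux hvx] at this
    linarith
  · refine hclose _ (reaction_one_sub_u_ge hc hφ.le (hM t₀ x₀).1 hv₀ huv₀ (le_antisymm h hu₀)) ?_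
    have := timeDeriv_sub_lapl_le_of_touch (w := 1 - u) hε.le ht₀
      ((differentiableAt_const 1).sub hut) (contDiff_const.sub hux)
      (fun t ht => (hbefore' t ht x₀).2.2) (fun x => (hspace' x).2.2) h
    rw [timeDeriv_sub (differentiableAt_const 1) hut, lapl_sub contDiff_const hux,
      timeDeriv_one, lapl_one] at this
    linarith

theorem regionGap_add_barrier_pos (hsol : IsBddClassicalSol d c u v) (hc : 0 ≤ c)
    (hM : ∀ t x, |u t x| ≤ M ∧ |v t x| ≤ M) (ha : 2 * d + 4 * c * (M + 1) + 2 < a)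
    (hinit : ∀ x, 0 ≤ regionGap (u 0 x) (v 0 x)) (hε : 0 < ε) {t : ℝ} (ht : 0 ≤ t)
    (x : Fin d → ℝ) : 0 < regionGap (u t x) (v t x) + ε * barrier a t x := by
  set F : ℝ × (Fin d → ℝ) → ℝ :=
    fun p => regionGap (u p.1 p.2) (v p.1 p.2) + ε * barrier a p.1 p.2
  have ha₀ : 0 ≤ a := by
    have : 0 ≤ M := (abs_nonneg _).trans (hM t x).1
    have : (0 : ℝ) ≤ d := d.cast_nonneg
    nlinarith
  have hF : ContinuousOn F (Ici 0 ×ˢ univ) :=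
    (continuous_regionGap.comp_continuousOn (hsol.cont_u.prodMk hsol.cont_v)).add
      (continuous_const.mul continuous_barrier).continuousOn
  have hbdd : Bornology.IsBounded {y | ∃ s, 0 ≤ s ∧ F (s, y) ≤ 0} := by
    refine (isBounded_setOf_sum_sq_le ((2 * M + 1) / ε)).subset fun y ⟨s, hs, hFs⟩ => ?_
    have hgap := neg_le_regionGap (hM s y).1 (hM s y).2
    have hsum := sum_sq_le_barrier (x := y) ha₀ hs
    rw [mem_ofPred_eq, le_div_iff₀ hε]
    nlinarith
  have hinit' (y : Fin d → ℝ) : 0 < F (0, y) :=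
    add_pos_of_nonneg_of_pos (hinit y) (mul_pos hε barrier_pos)
  by_contra! hneg
  obtain ⟨t₀, x₀, ht₀, htouch, hspace, hbefore⟩ := exists_first_time_nonpos hF hbdd hinit' ht hneg
  exact htouch.not_gt
    (hsol.regionGap_add_barrier_pos_of_pos_before hc hM ha hε ht₀ hbefore hspace x₀)

end IsBddClassicalSol

theorem stmt1_general (d : ℕ) (c : ℝ) (hc : 0 < c)
    (u v : ℝ → (Fin d → ℝ) → ℝ)
    (hsol : IsBddClassicalSol d c u v)
    (hinit : ∀ x, 0 ≤ v 0 x ∧ v 0 x ≤ u 0 x ∧ u 0 x ≤ 1) :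
    ∀ t, 0 ≤ t → ∀ x, 0 ≤ v t x ∧ v t x ≤ u t x ∧ u t x ≤ 1 := by
  obtain ⟨Cu, hCu⟩ := hsol.bdd_u
  obtain ⟨Cv, hCv⟩ := hsol.bdd_v
  have hM t x : |u t x| ≤ max Cu Cv ∧ |v t x| ≤ max Cu Cv :=
    ⟨(hCu t x).trans (le_max_left _ _), (hCv t x).trans (le_max_right _ _)⟩
  intro t ht x
  set a : ℝ := 2 * d + 4 * c * (max Cu Cv + 1) + 3
  refine regionGap_nonneg_iff.mp (le_of_forall_pos_lt_add fun δ hδ => ?_)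
  have hB : 0 < barrier a t x := barrier_pos
  have hpos := hsol.regionGap_add_barrier_pos (a := a) hc.le hM (by linarith)
    (fun y => regionGap_nonneg_iff.mpr (hinit y)) (div_pos hδ hB) ht x
  rwa [div_mul_cancel₀ _ hB.ne'] at hpos

/-- If a bounded classical solution of the system starts in
`ℛ = {(u,v) : 0 ≤ v ≤ u ≤ 1}`, it stays in `ℛ` for all `t ≥ 0`. -/
theorem stmt1 (d : ℕ) (hd : 1 ≤ d) (c : ℝ) (hc : 0 < c)
    (u v : ℝ → (Fin d → ℝ) → ℝ)
    (hsol : IsBddClassicalSol d c u v)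
    (hinit : ∀ x, 0 ≤ v 0 x ∧ v 0 x ≤ u 0 x ∧ u 0 x ≤ 1) :
    ∀ t, 0 ≤ t → ∀ x, 0 ≤ v t x ∧ v t x ≤ u t x ∧ u t x ≤ 1 :=
  stmt1_general d c hc u v hsol hinit
end

section
/- Let 0 < l < L. There exists s₁ > 0 such that for all s ∈ (0, s₁] and all x ∈ (−L−l−s, −L−l/200) ∪ (L+l/200, L+l+s), one has (e^{sΔ}f₀)(x) ≥ f₀(x) + s/(5l²). -/
open Set MeasureTheory

/-- The heat semigroup on ℝ:
`(e^{sΔ}g)(x) = (4πs)^{−1/2} ∫ e^{−y²/(4s)} g(x−y) dy` for `s > 0`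
(extended by the identity for `s ≤ 0`). -/
noncomputable def heatSG (s : ℝ) (g : ℝ → ℝ) (x : ℝ) : ℝ :=
  if s ≤ 0 then g x
  else (4 * Real.pi * s) ^ (-(1 : ℝ) / 2) * ∫ y : ℝ, Real.exp (-(y ^ 2) / (4 * s)) * g (x - y)

/-- The smoothed step function `h` with transition width `2l`. -/
noncomputable def hFun (l : ℝ) (x : ℝ) : ℝ :=
  if x < -l then 0
  else if x ≤ 0 then (1 / 2) * ((x + l) / l) ^ 2
  else if x ≤ l then 1 - (1 / 2) * ((l - x) / l) ^ 2
  else 1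

/-- The smoothed indicator `f₀` of `[−L,L]` with transition regions of width `2l`:
`f₀ = 1` on `[−L+l, L−l]`, `f₀(x) = h(x+L)` on `[−L−l, −L+l]`,
`f₀(x) = h(L−x)` on `[L−l, L+l]`, and `f₀ = 0` for `|x| ≥ L+l`. -/
noncomputable def f0 (l L : ℝ) (x : ℝ) : ℝ :=
  if x < -(L + l) then 0
  else if x < -L + l then hFun l (x + L)
  else if x ≤ L - l then 1
  else if x ≤ L + l then hFun l (L - x)
  else 0

/-! Write the heat semigroup as `e^{sΔ}g(x) = 𝔼 g(x - √(2s) Z)` with `Z` standard normal. At a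
point `x` of the transition region `(L + l/200, L + l + s)` put `u = L + l - x > -s`; for `y` with
`x - y ≥ L` one has `2l² f₀(x - y) = (u + y)₊²`, and this convex parabola dominates
`u₊² + 2u₊ y + ¾ y₊² - 4s²`, whose expectation at `y = √(2s) Z` is `u₊² + ¾ s - 4s²` because
`𝔼 Z = 0` and `𝔼 Z₊² = 1/2`. The points with `x - y < L` have `y > l/200`, so the error made there
is bounded by a multiple of `y⁴`, which costs only `O(s²)` in expectation. The left transition
region follows by evenness. -/

open ProbabilityTheory Real

lemma heatSG_eq_integral_gaussianReal {s : ℝ} (hs : 0 < s) (g : ℝ → ℝ) (x : ℝ) :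
    heatSG s g x = ∫ z, g (x - √(2 * s) * z) ∂gaussianReal 0 1 := by
  set σ := √(2 * s)
  have hσ2 : σ ^ 2 = 2 * s := sq_sqrt (by positivity)
  set e : ℝ ≃ᵐ ℝ := (Homeomorph.mulLeft₀ σ (by positivity)).toMeasurableEquiv
  have hmap : (gaussianReal 0 1).map e = gaussianReal 0 (2 * s).toNNReal := by
    rw [show (e : ℝ → ℝ) = (σ * ·) from rfl, gaussianReal_map_const_mul, mul_zero, mul_one]
    congr
    rw [hσ2, max_eq_left (by positivity)]
  change _ = ∫ z, g (x - e z) ∂gaussianReal 0 1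
  rw [← integral_map_equiv e (fun y ↦ g (x - y)), hmap,
    integral_gaussianReal_eq_integral_smul (by simp [hs]),
    heatSG, if_neg hs.not_ge, ← integral_const_mul]
  congr with y
  simp only [gaussianPDFReal, Real.coe_toNNReal _ (by positivity : (0 : ℝ) ≤ 2 * s), sub_zero,
    smul_eq_mul]
  rw [sqrt_eq_rpow, ← rpow_neg (by positivity)]
  ring_nf

lemma heatSG_neg_of_even {g : ℝ → ℝ} (hg : g.Even) (s x : ℝ) :
    heatSG s g (-x) = heatSG s g x := by
  unfold heatSG
  split_ifs
  · exact hg x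
  · congr 1
    rw [← integral_neg_eq_self]
    congr with y
    rw [neg_sq, show -x - -y = -(x - y) by ring, hg]

lemma integrable_pow_gaussianReal (μ : ℝ) (v : NNReal) (n : ℕ) :
    Integrable (fun z ↦ z ^ n) (gaussianReal μ v) :=
  integrable_pow_of_mem_interior_integrableExpSet (X := fun z ↦ z) (by simp) n

lemma integrable_sq_max_zero_gaussianReal (μ : ℝ) (v : NNReal) :
    Integrable (fun z ↦ max z 0 ^ 2) (gaussianReal μ v) := by
  refine (integrable_pow_gaussianReal μ v 2).mono' (by fun_prop) (ae_of_all _ fun z ↦ ?_)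
  rw [norm_pow, norm_eq_abs, sq_abs]
  rcases le_total z 0 with h | h <;> simp [h, sq_nonneg]

lemma integral_sq_max_zero_gaussianReal (v : NNReal) :
    ∫ z, max z 0 ^ 2 ∂gaussianReal 0 v = v / 2 := by
  have hsq : ∫ z, z ^ 2 ∂gaussianReal 0 v = v := by
    simpa using (variance_eq_integral (μ := gaussianReal 0 v) measurable_id'.aemeasurable).symm
  have hneg : ∫ z, max (-z) 0 ^ 2 ∂gaussianReal 0 v = ∫ z, max z 0 ^ 2 ∂gaussianReal 0 v :=
    calc ∫ z, max (-z) 0 ^ 2 ∂gaussianReal 0 v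
        = ∫ z, max z 0 ^ 2 ∂(gaussianReal 0 v).map (fun x ↦ -x) :=
          (integral_map (f := fun z : ℝ ↦ max z 0 ^ 2) (by fun_prop) (by fun_prop)).symm
      _ = ∫ z, max z 0 ^ 2 ∂gaussianReal 0 v := by rw [gaussianReal_map_neg, neg_zero]
  have hsplit : (fun z : ℝ ↦ max (-z) 0 ^ 2) = fun z ↦ z ^ 2 - max z 0 ^ 2 := by
    ext z; rcases le_total z 0 with h | h <;> simp [h]
  rw [hsplit, integral_sub (integrable_pow_gaussianReal 0 v 2)
    (integrable_sq_max_zero_gaussianReal 0 v), hsq] at hneg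
  linarith

lemma integrable_and_integral_sq_max_zero_pow_four_gaussianReal (a b c d : ℝ) :
    Integrable (fun z ↦ a + b * z + c * max z 0 ^ 2 - d * z ^ 4) (gaussianReal 0 1) ∧
      ∫ z, (a + b * z + c * max z 0 ^ 2 - d * z ^ 4) ∂gaussianReal 0 1
        = a + c / 2 - d * ∫ z, z ^ 4 ∂gaussianReal 0 1 := by
  have hz : Integrable (fun z : ℝ ↦ z) (gaussianReal 0 1) := by
    simpa using integrable_pow_gaussianReal 0 1 1
  have hz4 := integrable_pow_gaussianReal 0 1 4
  have hmax := integrable_sq_max_zero_gaussianReal 0 1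
  have i₁ : Integrable (fun z ↦ a + b * z) (gaussianReal 0 1) :=
    (integrable_const _).add (hz.const_mul _)
  have i₂ : Integrable (fun z ↦ a + b * z + c * max z 0 ^ 2) (gaussianReal 0 1) :=
    i₁.add (hmax.const_mul _)
  refine ⟨i₂.sub (hz4.const_mul _), ?_⟩
  rw [integral_sub i₂ (hz4.const_mul _), integral_add i₁ (hmax.const_mul _),
    integral_add (integrable_const _) (hz.const_mul _), integral_const, integral_const_mul,
    integral_const_mul, integral_const_mul, integral_id_gaussianReal,
    integral_sq_max_zero_gaussianReal]
  simp only [probReal_univ, smul_eq_mul, one_mul, NNReal.coe_one]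
  ring

lemma hFun_nonneg {l : ℝ} (hl : 0 < l) (x : ℝ) : 0 ≤ hFun l x := by
  unfold hFun
  split_ifs
  · rfl
  · positivity
  · have : ((l - x) / l) ^ 2 ≤ 1 := by
      rw [div_pow, div_le_one (by positivity)]
      nlinarith
    linarith
  · norm_num

lemma hFun_le_one {l : ℝ} (hl : 0 < l) (x : ℝ) : hFun l x ≤ 1 := by
  unfold hFun
  split_ifs
  · norm_num
  · have : ((x + l) / l) ^ 2 ≤ 1 := by
      rw [div_pow, div_le_one (by positivity)]
      nlinarith
    linarith
  · nlinarith [sq_nonneg ((l - x) / l)]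
  · rfl

lemma measurable_hFun (l : ℝ) : Measurable (hFun l) := by
  unfold hFun
  refine Measurable.ite (measurableSet_lt measurable_id measurable_const) measurable_const ?_
  refine Measurable.ite (measurableSet_le measurable_id measurable_const) (by fun_prop) ?_
  exact Measurable.ite (measurableSet_le measurable_id measurable_const) (by fun_prop)
    measurable_const

lemma measurable_f0 (l L : ℝ) : Measurable (f0 l L) := by
  unfold f0
  refine Measurable.ite (measurableSet_lt measurable_id measurable_const) measurable_const ?_
  refine Measurable.ite (measurableSet_lt measurable_id measurable_const)
    ((measurable_hFun l).comp (by fun_prop)) ?_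
  refine Measurable.ite (measurableSet_le measurable_id measurable_const) measurable_const ?_
  exact Measurable.ite (measurableSet_le measurable_id measurable_const)
    ((measurable_hFun l).comp (by fun_prop)) measurable_const

lemma f0_nonneg {l : ℝ} (hl : 0 < l) (L x : ℝ) : 0 ≤ f0 l L x := by
  unfold f0
  split_ifs <;> first | exact hFun_nonneg hl _ | norm_num

lemma f0_le_one {l : ℝ} (hl : 0 < l) (L x : ℝ) : f0 l L x ≤ 1 := by
  unfold f0
  split_ifs <;> first | exact hFun_le_one hl _ | norm_num

lemma f0_even {l L : ℝ} (hl : 0 < l) (hlL : l < L) : (f0 l L).Even := by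
  intro x
  unfold f0
  split_ifs <;> first | rfl | (exfalso; linarith) | (congr 1; ring)

lemma f0_of_le {l L z : ℝ} (hl : 0 < l) (hlL : l < L) (hz : L ≤ z) :
    f0 l L z = max (L + l - z) 0 ^ 2 / (2 * l ^ 2) := by
  unfold f0 hFun
  rcases le_or_gt z (L + l) with h | h
  · simp only [if_neg (show ¬z < -(L + l) by linarith), if_neg (show ¬z < -L + l by linarith),
      if_neg (show ¬z ≤ L - l by linarith), if_pos h, if_neg (show ¬L - z < -l by linarith),
      if_pos (show L - z ≤ 0 by linarith), max_eq_left (show 0 ≤ L + l - z by linarith)]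
    field_simp
    ring
  · simp only [if_neg (show ¬z < -(L + l) by linarith), if_neg (show ¬z < -L + l by linarith),
      if_neg (show ¬z ≤ L - l by linarith), if_neg (show ¬z ≤ L + l by linarith),
      max_eq_right (show L + l - z ≤ 0 by linarith)]
    ring

-- For `u < 0` the `-4 s²` absorbs the shift: `2 s y ≤ y² / 4 + 4 s²`.
lemma le_sq_max_zero_add {s u : ℝ} (hu : -s ≤ u) (y : ℝ) :
    max u 0 ^ 2 + 2 * max u 0 * y + 3 / 4 * max y 0 ^ 2 - 4 * s ^ 2 ≤ max (u + y) 0 ^ 2 := by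
  rcases le_total 0 u with hu0 | hu0 <;> rcases le_total 0 y with hy | hy <;>
    rcases le_total 0 (u + y) with huy | huy <;>
    simp only [max_eq_left, max_eq_right, hu0, hy, huy] <;>
    nlinarith [sq_nonneg (y / 2 - 2 * s), sq_nonneg s]

lemma sq_max_zero_sub_le_f0 {l L a x : ℝ} (hl : 0 < l) (hlL : l < L) (ha : 0 < a)
    (hx : L + a < x) (y : ℝ) :
    max (L + l - x + y) 0 ^ 2 - (l + a) ^ 2 / a ^ 4 * y ^ 4 ≤ 2 * l ^ 2 * f0 l L (x - y) := by
  have htail : 0 ≤ (l + a) ^ 2 / a ^ 4 * y ^ 4 := by positivity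
  by_cases hy : L ≤ x - y
  · rw [f0_of_le hl hlL hy, show L + l - (x - y) = L + l - x + y by ring,
      mul_div_cancel₀ _ (by positivity)]
    linarith
  · have hay : a ≤ y := by linarith
    have hlin : (l + y) * a ≤ (l + a) * y := by nlinarith
    have hsq : a ^ 2 ≤ y ^ 2 := pow_le_pow_left₀ ha.le hay 2
    have hbound : max (L + l - x + y) 0 ^ 2 ≤ (l + y) ^ 2 :=
      pow_le_pow_left₀ (le_max_right _ _) (max_le (by linarith) (by linarith)) 2
    have hquartic : (l + y) ^ 2 ≤ (l + a) ^ 2 / a ^ 4 * y ^ 4 := by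
      rw [div_mul_eq_mul_div, le_div_iff₀ (by positivity)]
      calc (l + y) ^ 2 * a ^ 4 = ((l + y) * a) ^ 2 * a ^ 2 := by ring
        _ ≤ ((l + a) * y) ^ 2 * y ^ 2 := by gcongr; nlinarith
        _ = (l + a) ^ 2 * y ^ 4 := by ring
    nlinarith [f0_nonneg hl L (x - y)]

-- The minorant integrates to `m² + ¾ s - 4 s² (1 + B C)`; the condition on `s` makes the
-- `s²` terms fit in the margin `¾ s - ⅖ s = 7 s / 20`.
lemma f0_add_le_heatSG_of_mem_Ioo {l L a s x : ℝ} (hl : 0 < l) (hlL : l < L) (ha : 0 < a)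
    (hs : 0 < s)
    (hs₁ : s * (4 * (1 + (l + a) ^ 2 / a ^ 4 * ∫ z, z ^ 4 ∂gaussianReal 0 1)) ≤ 7 / 20)
    (hx : x ∈ Ioo (L + a) (L + l + s)) :
    f0 l L x + s / (5 * l ^ 2) ≤ heatSG s (f0 l L) x := by
  set σ := √(2 * s)
  set B := (l + a) ^ 2 / a ^ 4
  set C := ∫ z, z ^ 4 ∂gaussianReal 0 1
  set m := max (L + l - x) 0
  have hσ : 0 ≤ σ := sqrt_nonneg _
  have hσ2 : σ ^ 2 = 2 * s := sq_sqrt (by positivity)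
  have hminorant (z : ℝ) : m ^ 2 - 4 * s ^ 2 + 2 * m * σ * z + 3 / 4 * σ ^ 2 * max z 0 ^ 2
      - B * σ ^ 4 * z ^ 4 ≤ 2 * l ^ 2 * f0 l L (x - σ * z) := by
    have hmain := le_sq_max_zero_add (u := L + l - x) (s := s) (by linarith [hx.2]) (σ * z)
    have htail := sq_max_zero_sub_le_f0 hl hlL ha hx.1 (σ * z)
    rw [show max (σ * z) 0 = σ * max z 0 by rw [mul_max_of_nonneg _ _ hσ, mul_zero]] at hmain
    linear_combination hmain + htail
  have hf0 : Integrable (fun z ↦ f0 l L (x - σ * z)) (gaussianReal 0 1) :=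
    .of_bound ((measurable_f0 l L).comp (by fun_prop)).aestronglyMeasurable 1 (ae_of_all _
      fun z ↦ by rw [norm_eq_abs, abs_of_nonneg (f0_nonneg hl L _)]; exact f0_le_one hl L _)
  obtain ⟨hint, hintegral⟩ := integrable_and_integral_sq_max_zero_pow_four_gaussianReal
    (m ^ 2 - 4 * s ^ 2) (2 * m * σ) (3 / 4 * σ ^ 2) (B * σ ^ 4)
  have hlower : m ^ 2 - 4 * s ^ 2 + 3 / 4 * σ ^ 2 / 2 - B * σ ^ 4 * C
      ≤ 2 * l ^ 2 * heatSG s (f0 l L) x := by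
    rw [← hintegral, heatSG_eq_integral_gaussianReal hs, ← integral_const_mul]
    exact integral_mono hint (hf0.const_mul _) hminorant
  rw [show σ ^ 4 = (σ ^ 2) ^ 2 by ring, hσ2] at hlower
  have hnum : m ^ 2 + 2 * s / 5 ≤ 2 * l ^ 2 * heatSG s (f0 l L) x := by nlinarith
  calc f0 l L x + s / (5 * l ^ 2) = (m ^ 2 + 2 * s / 5) / (2 * l ^ 2) := by
        rw [f0_of_le hl hlL (by linarith [hx.1])]; field_simp; ring
    _ ≤ heatSG s (f0 l L) x := by rw [div_le_iff₀ (by positivity)]; linarith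

/-- Lemma 4.4: there is `s₁ > 0` such that for all `s ∈ (0, s₁]` and all
`x ∈ (−L−l−s, −L−l/200) ∪ (L+l/200, L+l+s)`,
`(e^{sΔ}f₀)(x) ≥ f₀(x) + s/(5l²)`. -/
theorem stmt4 (l L : ℝ) (hl : 0 < l) (hlL : l < L) :
    ∃ s₁ > (0 : ℝ), ∀ s ∈ Ioc (0 : ℝ) s₁,
      ∀ x ∈ Ioo (-L - l - s) (-L - l / 200) ∪ Ioo (L + l / 200) (L + l + s),
        f0 l L x + s / (5 * l ^ 2) ≤ heatSG s (f0 l L) x := by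
  set K := 4 * (1 + (l + l / 200) ^ 2 / (l / 200) ^ 4 * ∫ z, z ^ 4 ∂gaussianReal 0 1)
  have hK : 0 < K := by
    have : 0 ≤ ∫ z, z ^ 4 ∂gaussianReal 0 1 := integral_nonneg fun z ↦ by positivity
    positivity
  refine ⟨7 / 20 / K, by positivity, ?_⟩
  rintro s ⟨hs, hs₁⟩ x hx
  have hsK : s * K ≤ 7 / 20 := (le_div_iff₀ hK).1 hs₁
  rcases hx with ⟨hx₁, hx₂⟩ | hx
  · rw [← neg_neg x, f0_even hl hlL, heatSG_neg_of_even (f0_even hl hlL)]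
    exact f0_add_le_heatSG_of_mem_Ioo hl hlL (by positivity) hs hsK
      ⟨by linarith, by linarith⟩
  · exact f0_add_le_heatSG_of_mem_Ioo hl hlL (by positivity) hs hsK hx
end
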